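/- Let 0 < t < 1, p₂ > 0 and α₂ < β₂ be real numbers with β₂ − α₂ = 4·√(p₂·t·(1−t)). Set Δ₂ = α₂² − α₂·β₂ + β₂², α = (−α₂ − β₂ + 2·√Δ₂)/3 and δ₂ = (α₂ + β₂ + √Δ₂)/3. Then α > 0 and ∫₋α^0 (δ₂ − x)/(2π·t·(1−t)) · √((x + α)/(−x)) dx = p₂; that is, the signed measure μ₂ on [−α, 0] with density dμ₂/dx = ((δ₂ − x)/(2π·t·(1−t)))·√((x + α)/(−x)) has total mass p₂. -/

import Mathlib

/-!
On `(-a, 0)` the functions `√((x + a) / -x)` and `-x * √((x + a) / -x)` have elementary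
primitives built from `√(-x (x + a))` and `arcsin ((2x + a) / a)`. Being nonnegative, they are
integrable, and `∫_{-a}^0 (d - x) √((x + a) / -x) dx = π a (a + 4d) / 8`. For the given `α`, `δ₂`
one has `α (α + 4δ₂) = (β₂ - α₂)² = 16 p₂ t (1 - t)`, and dividing by `2π t (1 - t)` leaves `p₂`.
-/

open MeasureTheory Set Real

theorem intervalIntegrable_and_integral_eq_sub_of_hasDerivAt_of_nonneg {f f' : ℝ → ℝ}
    {a b : ℝ} (hab : a ≤ b) (hcont : ContinuousOn f (Icc a b))
    (hderiv : ∀ x ∈ Ioo a b, HasDerivAt f (f' x) x) (hpos : ∀ x ∈ Ioo a b, 0 ≤ f' x) :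
    IntervalIntegrable f' volume a b ∧ ∫ x in a..b, f' x = f b - f a := by
  have hint : IntervalIntegrable f' volume a b :=
    (intervalIntegrable_iff_integrableOn_Ioc_of_le hab).2
      (intervalIntegral.integrableOn_deriv_of_nonneg hcont hderiv hpos)
  exact ⟨hint, intervalIntegral.integral_eq_sub_of_hasDerivAt_of_le hab hcont hderiv hint⟩

section Primitives

variable {a x : ℝ}

theorem sqrt_add_div_neg_eq_div_sqrt (hx : x ∈ Ioo (-a) 0) :
    √((x + a) / -x) = (x + a) / √(-x * (x + a)) := by
  obtain ⟨hxa, hx0⟩ := hx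
  have hS : 0 < √(-x * (x + a)) := sqrt_pos.2 (by nlinarith)
  rw [eq_div_iff hS.ne', ← sqrt_mul (div_nonneg (by linarith) (by linarith)),
    show (x + a) / -x * (-x * (x + a)) = (x + a) ^ 2 by field_simp [hx0.ne], sqrt_sq (by linarith)]

theorem hasDerivAt_sqrt_neg_mul_add (hx : x ∈ Ioo (-a) 0) :
    HasDerivAt (fun y ↦ √(-y * (y + a))) (-(2 * x + a) / (2 * √(-x * (x + a)))) x := by
  obtain ⟨hxa, hx0⟩ := hx
  have hpoly : HasDerivAt (fun y ↦ -y * (y + a)) (-(2 * x + a)) x :=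
    ((hasDerivAt_id' x).neg.mul ((hasDerivAt_id' x).add_const a)).congr_deriv
      (by simp only [Pi.neg_apply]; ring)
  exact hpoly.sqrt (by nlinarith)

theorem hasDerivAt_arcsin_two_mul_add_div (ha : 0 < a) (hx : x ∈ Ioo (-a) 0) :
    HasDerivAt (fun y ↦ arcsin ((2 * y + a) / a)) (1 / √(-x * (x + a))) x := by
  obtain ⟨hxa, hx0⟩ := hx
  have hlo : (2 * x + a) / a ≠ -1 := by
    rw [ne_eq, div_eq_iff ha.ne']; intro h; linarith
  have hhi : (2 * x + a) / a ≠ 1 := by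
    rw [ne_eq, div_eq_iff ha.ne']; intro h; linarith
  have hsqrt : √(1 - ((2 * x + a) / a) ^ 2) = 2 / a * √(-x * (x + a)) := by
    rw [show 1 - ((2 * x + a) / a) ^ 2 = (2 / a) ^ 2 * (-x * (x + a)) by field_simp; ring,
      sqrt_mul (sq_nonneg _), sqrt_sq (by positivity)]
  refine (hasDerivAt_arcsin hlo hhi).comp x
    ((((hasDerivAt_id x).const_mul 2).add_const a).div_const a) |>.congr_deriv ?_
  rw [hsqrt]; field_simp

noncomputable def sqrtRatioPrimitive (a x : ℝ) : ℝ :=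
  a / 2 * arcsin ((2 * x + a) / a) - √(-x * (x + a))

noncomputable def negMulSqrtRatioPrimitive (a x : ℝ) : ℝ :=
  a ^ 2 / 8 * arcsin ((2 * x + a) / a) + (2 * x + a) / 4 * √(-x * (x + a))

theorem hasDerivAt_sqrtRatioPrimitive (ha : 0 < a) (hx : x ∈ Ioo (-a) 0) :
    HasDerivAt (sqrtRatioPrimitive a) (√((x + a) / -x)) x := by
  have hS : 0 < √(-x * (x + a)) := sqrt_pos.2 (by nlinarith [hx.1, hx.2])
  rw [sqrt_add_div_neg_eq_div_sqrt hx]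
  refine ((hasDerivAt_arcsin_two_mul_add_div ha hx).const_mul (a / 2)).sub
    (hasDerivAt_sqrt_neg_mul_add hx) |>.congr_deriv ?_
  field_simp
  ring

theorem hasDerivAt_negMulSqrtRatioPrimitive (ha : 0 < a) (hx : x ∈ Ioo (-a) 0) :
    HasDerivAt (negMulSqrtRatioPrimitive a) (-x * √((x + a) / -x)) x := by
  have hS : 0 < √(-x * (x + a)) := sqrt_pos.2 (by nlinarith [hx.1, hx.2])
  have hS2 : √(-x * (x + a)) ^ 2 = -x * (x + a) := sq_sqrt (by nlinarith [hx.1, hx.2])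
  rw [sqrt_add_div_neg_eq_div_sqrt hx]
  refine ((hasDerivAt_arcsin_two_mul_add_div ha hx).const_mul (a ^ 2 / 8)).add
    ((((hasDerivAt_id' x).const_mul 2).add_const a).div_const 4 |>.mul
      (hasDerivAt_sqrt_neg_mul_add hx)) |>.congr_deriv ?_
  generalize √(-x * (x + a)) = S at hS hS2 ⊢
  field_simp
  linear_combination 32 * hS2

theorem sqrtRatioPrimitive_zero_sub_neg (ha : a ≠ 0) :
    sqrtRatioPrimitive a 0 - sqrtRatioPrimitive a (-a) = π * a / 2 := by
  rw [sqrtRatioPrimitive, sqrtRatioPrimitive, show (2 * 0 + a) / a = 1 by field_simp; ring,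
    show (2 * -a + a) / a = -1 by field_simp; ring, arcsin_one, arcsin_neg_one]
  simp
  ring

theorem negMulSqrtRatioPrimitive_zero_sub_neg (ha : a ≠ 0) :
    negMulSqrtRatioPrimitive a 0 - negMulSqrtRatioPrimitive a (-a) = π * a ^ 2 / 8 := by
  rw [negMulSqrtRatioPrimitive, negMulSqrtRatioPrimitive,
    show (2 * 0 + a) / a = 1 by field_simp; ring,
    show (2 * -a + a) / a = -1 by field_simp; ring, arcsin_one, arcsin_neg_one]
  simp
  ring

end Primitives

section Integrals

variable {a : ℝ}

theorem intervalIntegrable_and_integral_sqrt_add_div_neg (ha : 0 < a) :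
    IntervalIntegrable (fun x ↦ √((x + a) / -x)) volume (-a) 0 ∧
      ∫ x in -a..0, √((x + a) / -x) = π * a / 2 := by
  rw [← sqrtRatioPrimitive_zero_sub_neg ha.ne']
  exact intervalIntegrable_and_integral_eq_sub_of_hasDerivAt_of_nonneg (by linarith)
    (by unfold sqrtRatioPrimitive; fun_prop) (fun x hx ↦ hasDerivAt_sqrtRatioPrimitive ha hx)
    (fun x _ ↦ sqrt_nonneg _)

theorem intervalIntegrable_and_integral_neg_mul_sqrt_add_div_neg (ha : 0 < a) :
    IntervalIntegrable (fun x ↦ -x * √((x + a) / -x)) volume (-a) 0 ∧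
      ∫ x in -a..0, -x * √((x + a) / -x) = π * a ^ 2 / 8 := by
  rw [← negMulSqrtRatioPrimitive_zero_sub_neg ha.ne']
  exact intervalIntegrable_and_integral_eq_sub_of_hasDerivAt_of_nonneg (by linarith)
    (by unfold negMulSqrtRatioPrimitive; fun_prop)
    (fun x hx ↦ hasDerivAt_negMulSqrtRatioPrimitive ha hx)
    (fun x hx ↦ mul_nonneg (by linarith [hx.2]) (sqrt_nonneg _))

theorem integral_sub_mul_sqrt_add_div_neg (ha : 0 < a) (d : ℝ) :
    ∫ x in -a..0, (d - x) * √((x + a) / -x) = π * a * (a + 4 * d) / 8 := by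
  obtain ⟨hint₁, hval₁⟩ := intervalIntegrable_and_integral_sqrt_add_div_neg ha
  obtain ⟨hint₂, hval₂⟩ := intervalIntegrable_and_integral_neg_mul_sqrt_add_div_neg ha
  have hsplit : (fun x ↦ (d - x) * √((x + a) / -x))
      = fun x ↦ d * √((x + a) / -x) + -x * √((x + a) / -x) := by
    ext x; ring
  rw [hsplit, intervalIntegral.integral_add (hint₁.const_mul d) hint₂,
    intervalIntegral.integral_const_mul, hval₁, hval₂]
  ring

end Integrals

theorem sq_sub_mul_add_sq_nonneg (a b : ℝ) : 0 ≤ a ^ 2 - a * b + b ^ 2 := by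
  nlinarith [sq_nonneg (a - b), sq_nonneg a, sq_nonneg b]

theorem add_lt_two_mul_sqrt_sq_sub_mul_add_sq {a b : ℝ} (hab : a ≠ b) :
    a + b < 2 * √(a ^ 2 - a * b + b ^ 2) := by
  have hsq := sq_sqrt (sq_sub_mul_add_sq_nonneg a b)
  have hgap : 0 < 3 * (a - b) ^ 2 := by have := sub_ne_zero.2 hab; positivity
  nlinarith [sqrt_nonneg (a ^ 2 - a * b + b ^ 2)]

theorem mul_add_four_mul_eq_sq_sub (a b α δ : ℝ)
    (hα : α = (-a - b + 2 * √(a ^ 2 - a * b + b ^ 2)) / 3)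
    (hδ : δ = (a + b + √(a ^ 2 - a * b + b ^ 2)) / 3) :
    α * (α + 4 * δ) = (b - a) ^ 2 := by
  have hsq := sq_sqrt (sq_sub_mul_add_sq_nonneg a b)
  subst hα hδ
  linear_combination (4 / 3 : ℝ) * hsq

/-- The signed measure `μ₂` on `[−α, 0]` with density
`((δ₂ − x)/(2π t(1−t)))·√((x + α)/(−x))` has total mass `p₂`, and `α > 0`. -/
theorem mu2_total_mass (t p₂ α₂ β₂ : ℝ) (ht0 : 0 < t) (ht1 : t < 1)
    (hp₂ : 0 < p₂) (hαβ : α₂ < β₂)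
    (hsep : β₂ - α₂ = 4 * Real.sqrt (p₂ * t * (1 - t)))
    (Δ₂ α δ₂ : ℝ)
    (hΔ₂ : Δ₂ = α₂ ^ 2 - α₂ * β₂ + β₂ ^ 2)
    (hα : α = (-α₂ - β₂ + 2 * Real.sqrt Δ₂) / 3)
    (hδ₂ : δ₂ = (α₂ + β₂ + Real.sqrt Δ₂) / 3) :
    0 < α ∧
      ∫ x in (-α)..(0:ℝ),
        (δ₂ - x) / (2 * Real.pi * t * (1 - t)) * Real.sqrt ((x + α) / (-x)) = p₂ := by
  subst hΔ₂
  have hα_pos : 0 < α := by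
    linarith [add_lt_two_mul_sqrt_sq_sub_mul_add_sq hαβ.ne]
  have h1t : 0 < 1 - t := by linarith
  have hmass : α * (α + 4 * δ₂) = 16 * (p₂ * (t * (1 - t))) := by
    rw [mul_add_four_mul_eq_sq_sub α₂ β₂ α δ₂ hα hδ₂, hsep, mul_pow,
      sq_sqrt (by positivity)]
    ring
  refine ⟨hα_pos, ?_⟩
  simp_rw [div_mul_eq_mul_div, intervalIntegral.integral_div,
    integral_sub_mul_sqrt_add_div_neg hα_pos]
  rw [mul_assoc π, hmass]
  field_simp [h1t.ne']
  norm_num
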